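/- Let n ≥ 1, let a_1, …, a_n ∈ 𝔻 not all zero, and set A = max_k |a_k| > 0. For 0 < λ < 1/A, let B_λ(z) = ∏_{k=1}^n (z - λ a_k)/(1 - λ conj(a_k) z). Then λ ↦ M(B_λ) = sup_{|z|=1}|B_λ'(z)| is strictly increasing and λ ↦ m(B_λ) = inf_{|z|=1}|B_λ'(z)| is strictly decreasing on (0, 1/A). -/

import Mathlib

/-!
On the unit circle `|B_λ'(z)| = ∑ P(λ a_k, z)`, and since `|z| = 1` this equals `Re H(λ z̄)` for
`H(w) = ∑ (1 + w a_k) / (1 - w a_k)`, holomorphic on `|w| < 1/A`. Hence `M(B_λ)` and `m(B_λ)` are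
the maximum and minimum of the harmonic function `Re H` on the circle `|w| = λ`. `Re H` is not
constant: it equals `n` at `0` and exceeds `n` near the pole `1 / a_k` of a zero with `|a_k| = A`.
By the maximum principle (applied to `exp (± H)`) it has no interior local extremum, so its maximum
over the circle `|w| = λ` strictly increases with `λ` and its minimum strictly decreases.
-/

open Complex ComplexConjugate Metric Topology

section SphereExtrema

variable {E : Type*} [NormedAddCommGroup E] [NormedSpace ℝ E] [Nontrivial E] [ProperSpace E]
  {f : E → ℝ} {c : E} {r₁ r₂ : ℝ}

theorem sSup_image_sphere_lt_of_forall_not_isLocalMax (hr₁ : 0 ≤ r₁) (hr : r₁ < r₂)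
    (hf : ContinuousOn f (closedBall c r₂)) (hmax : ∀ p ∈ ball c r₂, ¬IsLocalMax f p) :
    sSup (f '' sphere c r₁) < sSup (f '' sphere c r₂) := by
  have not_isMaxOn : ∀ q ∈ ball c r₂, ¬IsMaxOn f (closedBall c r₂) q := fun q hq hq' =>
    hmax q hq <| hq'.isLocalMax <|
      Filter.mem_of_superset (isOpen_ball.mem_nhds hq) ball_subset_closedBall
  obtain ⟨p, hpK, hp⟩ := (isCompact_closedBall c r₂).exists_isMaxOn
    (nonempty_closedBall.2 (hr₁.trans hr.le)) hf
  have hpS : p ∈ sphere c r₂ := by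
    rw [← closedBall_sdiff_ball]
    exact ⟨hpK, fun hpB => not_isMaxOn p hpB hp⟩
  have hS₁K : sphere c r₁ ⊆ ball c r₂ :=
    sphere_subset_closedBall.trans (closedBall_subset_ball hr)
  obtain ⟨q, hqS, hq⟩ := (isCompact_sphere c r₁).exists_isMaxOn
    (NormedSpace.sphere_nonempty.2 hr₁) (hf.mono (hS₁K.trans ball_subset_closedBall))
  have hqp : f q < f p := by
    refine (hp (ball_subset_closedBall (hS₁K hqS))).lt_of_ne fun hqp => ?_
    exact not_isMaxOn q (hS₁K hqS) fun x hx => (hp hx).trans_eq hqp.symm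
  rwa [IsGreatest.csSup_eq ⟨Set.mem_image_of_mem f hqS, Set.forall_mem_image.2 fun x hx => hq hx⟩,
    IsGreatest.csSup_eq ⟨Set.mem_image_of_mem f hpS,
      Set.forall_mem_image.2 fun x hx => hp (sphere_subset_closedBall hx)⟩]

theorem sInf_image_sphere_lt_of_forall_not_isLocalMin (hr₁ : 0 ≤ r₁) (hr : r₁ < r₂)
    (hf : ContinuousOn f (closedBall c r₂)) (hmin : ∀ p ∈ ball c r₂, ¬IsLocalMin f p) :
    sInf (f '' sphere c r₂) < sInf (f '' sphere c r₁) := by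
  have key := sSup_image_sphere_lt_of_forall_not_isLocalMax hr₁ hr hf.neg
    fun p hp h => hmin p hp (by simpa using h.neg)
  rwa [Real.sInf_def, Real.sInf_def, neg_lt_neg_iff, ← Set.image_neg_eq_neg, Set.image_image,
    ← Set.image_neg_eq_neg, Set.image_image]

end SphereExtrema

theorem Complex.eqOn_re_of_isLocalMax_re {G : ℂ → ℂ} {U : Set ℂ} {p : ℂ}
    (hG : DifferentiableOn ℂ G U) (hU : IsOpen U) (hU' : IsPreconnected U) (hp : p ∈ U)
    (hmax : IsLocalMax (fun w => (G w).re) p) :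
    Set.EqOn (fun w => (G w).re) (fun _ => (G p).re) U := by
  have hexp : DifferentiableOn ℂ (fun w => exp (G w)) U := hG.cexp
  have hlocal : ∀ᶠ w in 𝓝 p, exp (G w) = exp (G p) := by
    refine Complex.eventually_eq_of_isLocalMax_norm ?_ ?_
    · filter_upwards [hU.mem_nhds hp] with w hw using hexp.differentiableAt (hU.mem_nhds hw)
    · simpa only [Function.comp_def, norm_exp] using hmax.comp_mono Real.exp_monotone
  have hconst := (hexp.analyticOnNhd hU).eqOn_of_preconnected_of_eventuallyEq analyticOnNhd_const
    hU' hp hlocal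
  intro w hw
  simpa only [norm_exp, Real.exp_eq_exp] using congrArg norm (hconst hw)

theorem Complex.not_isLocalMax_re_of_ne {G : ℂ → ℂ} {U : Set ℂ} (hG : DifferentiableOn ℂ G U)
    (hU : IsOpen U) (hU' : IsPreconnected U) {x y : ℂ} (hx : x ∈ U) (hy : y ∈ U)
    (hxy : (G x).re ≠ (G y).re) {p : ℂ} (hp : p ∈ U) : ¬IsLocalMax (fun w => (G w).re) p :=
  fun hmax => hxy <| (eqOn_re_of_isLocalMax_re hG hU hU' hp hmax hx).trans
    (eqOn_re_of_isLocalMax_re hG hU hU' hp hmax hy).symm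

theorem Complex.not_isLocalMin_re_of_ne {G : ℂ → ℂ} {U : Set ℂ} (hG : DifferentiableOn ℂ G U)
    (hU : IsOpen U) (hU' : IsPreconnected U) {x y : ℂ} (hx : x ∈ U) (hy : y ∈ U)
    (hxy : (G x).re ≠ (G y).re) {p : ℂ} (hp : p ∈ U) : ¬IsLocalMin (fun w => (G w).re) p := by
  intro hmin
  refine not_isLocalMax_re_of_ne hG.neg hU hU' hx hy ?_ hp
    (by simpa only [Pi.neg_apply, neg_re] using hmin.neg)
  simpa only [Pi.neg_apply, neg_re, ne_eq, neg_inj] using hxy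

noncomputable def blaschkeFactor (c z : ℂ) : ℂ := (z - c) / (1 - conj c * z)

section UnitCircle

variable {c z : ℂ}

theorem conj_mul_self_of_norm_eq_one (hz : ‖z‖ = 1) : conj z * z = 1 := by
  rw [conj_mul', hz]; norm_num

theorem norm_one_sub_conj_mul (hz : ‖z‖ = 1) (c : ℂ) : ‖1 - conj c * z‖ = ‖z - c‖ := by
  have : 1 - conj c * z = conj (conj z * (z - c)) := by
    rw [map_mul, map_sub, conj_conj]
    linear_combination -conj_mul_self_of_norm_eq_one hz
  rw [this, norm_conj, norm_mul, norm_conj, hz, one_mul]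

theorem sub_ne_zero_of_norm_lt_one (hz : ‖z‖ = 1) (hc : ‖c‖ < 1) : z - c ≠ 0 :=
  sub_ne_zero.2 fun h => by rw [h] at hz; linarith

theorem one_sub_conj_mul_ne_zero (hz : ‖z‖ = 1) (hc : ‖c‖ < 1) : 1 - conj c * z ≠ 0 := by
  rw [← norm_ne_zero_iff, norm_one_sub_conj_mul hz, norm_ne_zero_iff]
  exact sub_ne_zero_of_norm_lt_one hz hc

theorem norm_blaschkeFactor (hz : ‖z‖ = 1) (hc : ‖c‖ < 1) : ‖blaschkeFactor c z‖ = 1 := by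
  rw [blaschkeFactor, norm_div, norm_one_sub_conj_mul hz,
    div_self (norm_ne_zero_iff.2 (sub_ne_zero_of_norm_lt_one hz hc))]

end UnitCircle

theorem poissonKernel_zero_nonneg {w z : ℂ} (h : ‖w‖ ≤ ‖z‖) : 0 ≤ poissonKernel 0 w z := by
  simp only [poissonKernel_def, sub_zero]
  have := pow_le_pow_left₀ (norm_nonneg w) h 2
  positivity

theorem hasDerivAt_blaschkeFactor {c z : ℂ} (h : 1 - conj c * z ≠ 0) :
    HasDerivAt (blaschkeFactor c) ((1 - conj c * c) / (1 - conj c * z) ^ 2) z := by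
  have hnum : HasDerivAt (fun y => y - c) 1 z := (hasDerivAt_id z).sub_const c
  have hden : HasDerivAt (fun y => 1 - conj c * y) (-conj c) z := by
    simpa using ((hasDerivAt_id z).const_mul (conj c)).const_sub 1
  exact (hnum.fun_div hden h).congr_deriv (by ring)

theorem blaschkeFactor_deriv_mul_conj {c z : ℂ} (hz : ‖z‖ = 1) (hc : ‖c‖ < 1) :
    (1 - conj c * c) / (1 - conj c * z) ^ 2 * (z * conj (blaschkeFactor c z)) =
      poissonKernel 0 c z := by
  set D := 1 - conj c * z with hD
  have hD0 : D ≠ 0 := one_sub_conj_mul_ne_zero hz hc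
  have hrot : z * conj (blaschkeFactor c z) = D / conj D := by
    rw [blaschkeFactor, map_div₀, map_sub, ← mul_div_assoc, ← hD]
    congr 1
    linear_combination conj_mul_self_of_norm_eq_one hz
  have hDD : D * conj D = ((‖z - c‖ ^ 2 : ℝ) : ℂ) := by
    rw [mul_conj', hD, norm_one_sub_conj_mul hz]; norm_cast
  simp only [poissonKernel_def, sub_zero]
  rw [hrot, hz, one_pow, ofReal_div, ← hDD, ofReal_sub, ofReal_one, ofReal_pow, ← conj_mul']
  field_simp

theorem prod_erase_mul_conj_prod {ι : Type*} [DecidableEq ι] {s : Finset ι} {φ : ι → ℂ}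
    (hφ : ∀ j ∈ s, ‖φ j‖ = 1) {k : ι} (hk : k ∈ s) :
    (∏ j ∈ s.erase k, φ j) * conj (∏ j ∈ s, φ j) = conj (φ k) := by
  rw [map_prod, ← Finset.mul_prod_erase s _ hk, mul_left_comm, ← Finset.prod_mul_distrib,
    Finset.prod_eq_one fun j hj => ?_, mul_one]
  rw [mul_conj', hφ j (Finset.mem_of_mem_erase hj)]
  norm_num

theorem norm_deriv_prod_blaschkeFactor {ι : Type*} [Fintype ι] {c : ι → ℂ}
    (hc : ∀ k, ‖c k‖ < 1) {z : ℂ} (hz : ‖z‖ = 1) :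
    ‖deriv (fun y => ∏ k, blaschkeFactor (c k) y) z‖ = ∑ k, poissonKernel 0 (c k) z := by
  classical
  have hderiv := HasDerivAt.fun_finsetProd (u := Finset.univ) fun k _ =>
    hasDerivAt_blaschkeFactor (one_sub_conj_mul_ne_zero hz (hc k))
  -- Multiplying by the unimodular `z * conj (B z)` turns each summand into a Poisson kernel.
  have hrot : ‖z * conj (∏ k, blaschkeFactor (c k) z)‖ = 1 := by
    rw [norm_mul, norm_conj, norm_prod, hz,
      Finset.prod_eq_one fun k _ => norm_blaschkeFactor hz (hc k), one_mul]
  have hsum : (∑ k, (∏ j ∈ Finset.univ.erase k, blaschkeFactor (c j) z) •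
      ((1 - conj (c k) * c k) / (1 - conj (c k) * z) ^ 2)) *
        (z * conj (∏ k, blaschkeFactor (c k) z))
      = ((∑ k, poissonKernel 0 (c k) z : ℝ) : ℂ) := by
    rw [Finset.sum_mul, ofReal_sum]
    refine Finset.sum_congr rfl fun k hk => ?_
    rw [← blaschkeFactor_deriv_mul_conj hz (hc k), smul_eq_mul,
      ← prod_erase_mul_conj_prod (fun j _ => norm_blaschkeFactor hz (hc j)) hk]
    ring
  rw [hderiv.deriv, ← mul_one ‖_‖, ← hrot, ← norm_mul, hsum, norm_real, Real.norm_of_nonneg]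
  exact Finset.sum_nonneg fun k _ => poissonKernel_zero_nonneg (by rw [hz]; exact (hc k).le)

noncomputable def herglotzSum {ι : Type*} [Fintype ι] (a : ι → ℂ) (w : ℂ) : ℂ :=
  ∑ k, (1 + w * a k) / (1 - w * a k)

theorem re_one_add_div_one_sub (u : ℂ) : ((1 + u) / (1 - u)).re = poissonKernel 0 u 1 := by
  simp [poissonKernel_eq_re_herglotzRieszKernel, herglotzRieszKernel_def]

theorem poissonKernel_zero_eq_one {z : ℂ} (hz : ‖z‖ = 1) (w : ℂ) :
    poissonKernel 0 w z = poissonKernel 0 (conj z * w) 1 := by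
  have h1 : ‖1 - conj z * w‖ = ‖z - w‖ := by
    rw [← one_mul ‖z - w‖, ← hz, ← norm_conj z, ← norm_mul]
    congr 1
    linear_combination -conj_mul_self_of_norm_eq_one hz
  simp only [poissonKernel_def, sub_zero, norm_mul, norm_conj, hz, h1, norm_one, one_mul]

theorem poissonKernel_zero_ofReal_one {t : ℝ} (ht : t < 1) :
    poissonKernel 0 t 1 = (1 + t) / (1 - t) := by
  have : (1 : ℂ) - t = ((1 - t : ℝ) : ℂ) := by push_cast; ring
  rw [poissonKernel_def, sub_zero, sub_zero, this, norm_real, norm_real, norm_one,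
    Real.norm_eq_abs, Real.norm_eq_abs, sq_abs, sq_abs]
  have : 1 - t ≠ 0 := by linarith
  field_simp
  ring

variable {ι : Type*} [Fintype ι] {a : ι → ℂ}

theorem re_herglotzSum_mul_conj {z : ℂ} (hz : ‖z‖ = 1) (r : ℂ) :
    (herglotzSum a (r * conj z)).re = ∑ k, poissonKernel 0 (r * a k) z := by
  simp only [herglotzSum, re_sum, re_one_add_div_one_sub, poissonKernel_zero_eq_one hz]
  congr! 2
  ring

theorem norm_mul_lt_one_of_mem_ball {A : ℝ} {w x : ℂ} (hw : w ∈ ball (0 : ℂ) A⁻¹)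
    (hx : ‖x‖ ≤ A) : ‖w * x‖ < 1 := by
  rw [mem_ball_zero_iff] at hw
  have hA : 0 < A := inv_pos.1 ((norm_nonneg w).trans_lt hw)
  calc ‖w * x‖ = ‖w‖ * ‖x‖ := norm_mul w x
    _ ≤ ‖w‖ * A := by gcongr
    _ < A⁻¹ * A := by gcongr
    _ = 1 := inv_mul_cancel₀ hA.ne'

theorem differentiableOn_herglotzSum {A : ℝ} (ha : ∀ k, ‖a k‖ ≤ A) :
    DifferentiableOn ℂ (herglotzSum a) (ball 0 A⁻¹) := by
  unfold herglotzSum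
  refine DifferentiableOn.fun_sum fun k _ => DifferentiableOn.div (by fun_prop) (by fun_prop) ?_
  exact fun w hw h =>
    (norm_mul_lt_one_of_mem_ball hw (ha k)).ne (by rw [← sub_eq_zero.1 h, norm_one])

theorem re_herglotzSum_zero : (herglotzSum a 0).re = (Fintype.card ι : ℝ) := by
  simp [herglotzSum]

theorem exists_card_lt_re_herglotzSum {k₀ : ι} (hk₀ : a k₀ ≠ 0) (ha : ∀ k, ‖a k‖ ≤ ‖a k₀‖) :
    ∃ w ∈ ball (0 : ℂ) ‖a k₀‖⁻¹, (Fintype.card ι : ℝ) < (herglotzSum a w).re := by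
  set n : ℝ := (Fintype.card ι : ℝ)
  -- `w` is chosen with `w * a k₀ = t`, where the `k₀`-th summand alone has real part `2n + 1`.
  set t : ℝ := n / (n + 1)
  have hn : 0 ≤ n := Nat.cast_nonneg _
  have ht0 : 0 ≤ t := by positivity
  have ht1 : t < 1 := by rw [div_lt_one (by positivity)]; linarith
  have hA : 0 < ‖a k₀‖ := norm_pos_iff.2 hk₀
  set w : ℂ := ((t / ‖a k₀‖ ^ 2 : ℝ) : ℂ) * conj (a k₀)
  have hwa : w * a k₀ = t := by
    rw [mul_assoc, conj_mul', ← ofReal_pow, ← ofReal_mul, div_mul_cancel₀ _ (by positivity)]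
  have hw : ‖w‖ = t * ‖a k₀‖⁻¹ := by
    rw [norm_mul, norm_real, norm_conj, Real.norm_of_nonneg (by positivity)]
    field_simp
  have hw_mem : w ∈ ball (0 : ℂ) ‖a k₀‖⁻¹ := by
    rw [mem_ball_zero_iff, hw]
    exact mul_lt_of_lt_one_left (inv_pos.2 hA) ht1
  refine ⟨w, hw_mem, ?_⟩
  calc n < (1 + t) / (1 - t) := by
        rw [lt_div_iff₀ (by linarith)]
        simp only [t]
        field_simp
        nlinarith
    _ = ((1 + w * a k₀) / (1 - w * a k₀)).re := by
        rw [re_one_add_div_one_sub, hwa, poissonKernel_zero_ofReal_one ht1]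
    _ ≤ (herglotzSum a w).re := by
        rw [herglotzSum, re_sum]
        refine Finset.single_le_sum (f := fun k => ((1 + w * a k) / (1 - w * a k)).re)
          (fun k _ => ?_) (Finset.mem_univ k₀)
        rw [re_one_add_div_one_sub]
        refine poissonKernel_zero_nonneg ?_
        rw [norm_one]
        exact (norm_mul_lt_one_of_mem_ball hw_mem (ha k)).le

theorem not_isLocalMax_re_herglotzSum {k₀ : ι} (hk₀ : a k₀ ≠ 0) (ha : ∀ k, ‖a k‖ ≤ ‖a k₀‖) {p : ℂ}
    (hp : p ∈ ball (0 : ℂ) ‖a k₀‖⁻¹) : ¬IsLocalMax (fun w => (herglotzSum a w).re) p := by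
  obtain ⟨w, hw, hlt⟩ := exists_card_lt_re_herglotzSum hk₀ ha
  exact not_isLocalMax_re_of_ne (differentiableOn_herglotzSum ha) isOpen_ball
    (convex_ball _ _).isPreconnected (mem_ball_self (by positivity)) hw
    (re_herglotzSum_zero.trans_lt hlt).ne hp

theorem not_isLocalMin_re_herglotzSum {k₀ : ι} (hk₀ : a k₀ ≠ 0) (ha : ∀ k, ‖a k‖ ≤ ‖a k₀‖) {p : ℂ}
    (hp : p ∈ ball (0 : ℂ) ‖a k₀‖⁻¹) : ¬IsLocalMin (fun w => (herglotzSum a w).re) p := by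
  obtain ⟨w, hw, hlt⟩ := exists_card_lt_re_herglotzSum hk₀ ha
  exact not_isLocalMin_re_of_ne (differentiableOn_herglotzSum ha) isOpen_ball
    (convex_ball _ _).isPreconnected (mem_ball_self (by positivity)) hw
    (re_herglotzSum_zero.trans_lt hlt).ne hp

theorem image_mul_conj_sphere {r : ℝ} (hr : 0 < r) :
    (fun z : ℂ => (r : ℂ) * conj z) '' sphere 0 1 = sphere 0 r := by
  have hconj : conj '' sphere (0 : ℂ) 1 = sphere 0 1 := by
    have := conjLIE.image_sphere 0 1
    rwa [conjLIE_apply, map_zero] at this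
  have hscale := smul_sphere' (ofReal_ne_zero.2 hr.ne') (0 : ℂ) 1
  rw [smul_zero, norm_real, Real.norm_of_nonneg hr.le, mul_one, ← Set.image_smul] at hscale
  rw [← Set.image_image (fun z : ℂ => (r : ℂ) * z) conj, hconj, ← hscale]
  rfl

theorem image_norm_deriv_prod_blaschkeFactor_mul {A r : ℝ} (ha : ∀ k, ‖a k‖ ≤ A)
    (hr : r ∈ Set.Ioo 0 A⁻¹) :
    (fun z => ‖deriv (fun y => ∏ k, blaschkeFactor (r * a k) y) z‖) '' sphere 0 1 =
      (fun w => (herglotzSum a w).re) '' sphere 0 r := by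
  have hr_mem : (r : ℂ) ∈ ball (0 : ℂ) A⁻¹ := by
    rw [mem_ball_zero_iff, norm_real, Real.norm_of_nonneg hr.1.le]
    exact hr.2
  rw [← image_mul_conj_sphere hr.1, Set.image_image]
  refine Set.image_congr fun z hz => ?_
  rw [mem_sphere_zero_iff_norm] at hz
  rw [norm_deriv_prod_blaschkeFactor (fun k => norm_mul_lt_one_of_mem_ball hr_mem (ha k)) hz,
    re_herglotzSum_mul_conj hz]

theorem blaschke_scaled_monotone_general (n : ℕ) (a : Fin n → ℂ) (A : ℝ)
    (hA : IsGreatest (Set.range fun k => ‖a k‖) A) (hA0 : 0 < A)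
    (B : ℝ → ℂ → ℂ)
    (hB : ∀ lam z, B lam z =
      ∏ k, (z - lam * a k) / (1 - lam * (starRingEnd ℂ) (a k) * z))
    (Mf mf : ℝ → ℝ)
    (hMf : ∀ lam, Mf lam =
      sSup ((fun z => ‖deriv (B lam) z‖) '' {z : ℂ | ‖z‖ = 1}))
    (hmf : ∀ lam, mf lam =
      sInf ((fun z => ‖deriv (B lam) z‖) '' {z : ℂ | ‖z‖ = 1})) :
    StrictMonoOn Mf (Set.Ioo 0 (1 / A)) ∧ StrictAntiOn mf (Set.Ioo 0 (1 / A)) := by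
  obtain ⟨⟨k₀, rfl⟩, hA_ub⟩ := hA
  have ha : ∀ k, ‖a k‖ ≤ ‖a k₀‖ := fun k => hA_ub ⟨k, rfl⟩
  have hk₀ : a k₀ ≠ 0 := norm_pos_iff.1 hA0
  have himage : ∀ r ∈ Set.Ioo 0 ‖a k₀‖⁻¹, (fun z => ‖deriv (B r) z‖) '' {z : ℂ | ‖z‖ = 1} =
      (fun w => (herglotzSum a w).re) '' sphere 0 r := by
    intro r hr
    have hBr : B r = fun y => ∏ k, blaschkeFactor (r * a k) y := by
      ext y
      simp only [hB, blaschkeFactor, map_mul, conj_ofReal]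
    rw [hBr, ← image_norm_deriv_prod_blaschkeFactor_mul ha hr]
    congr 1
    ext z
    exact mem_sphere_zero_iff_norm.symm
  have hcont : ∀ r < ‖a k₀‖⁻¹, ContinuousOn (fun w => (herglotzSum a w).re) (closedBall 0 r) :=
    fun r hr => continuous_re.comp_continuousOn
      ((differentiableOn_herglotzSum ha).continuousOn.mono (closedBall_subset_ball hr))
  rw [one_div]
  refine ⟨fun r₁ h₁ r₂ h₂ hr => ?_, fun r₁ h₁ r₂ h₂ hr => ?_⟩
  · rw [hMf, hMf, himage r₁ h₁, himage r₂ h₂]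
    exact sSup_image_sphere_lt_of_forall_not_isLocalMax h₁.1.le hr (hcont r₂ h₂.2) fun p hp =>
      not_isLocalMax_re_herglotzSum hk₀ ha (ball_subset_ball h₂.2.le hp)
  · rw [hmf, hmf, himage r₁ h₁, himage r₂ h₂]
    exact sInf_image_sphere_lt_of_forall_not_isLocalMin h₁.1.le hr (hcont r₂ h₂.2) fun p hp =>
      not_isLocalMin_re_herglotzSum hk₀ ha (ball_subset_ball h₂.2.le hp)

/-- Scaling the zeros of a Blaschke product monotonically: with zeros `λ a k`,
`λ ↦ sup_{|z|=1}|B_λ'|` is strictly increasing and `λ ↦ inf_{|z|=1}|B_λ'|` is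
strictly decreasing on `(0, 1/A)`, where `A = max_k |a k| > 0`. -/
theorem blaschke_scaled_monotone (n : ℕ) (hn : 1 ≤ n) (a : Fin n → ℂ)
    (ha : ∀ k, ‖a k‖ < 1) (A : ℝ)
    (hA : IsGreatest (Set.range fun k => ‖a k‖) A) (hA0 : 0 < A)
    (B : ℝ → ℂ → ℂ)
    (hB : ∀ lam z, B lam z =
      ∏ k, (z - lam * a k) / (1 - lam * (starRingEnd ℂ) (a k) * z))
    (Mf mf : ℝ → ℝ)
    (hMf : ∀ lam, Mf lam =
      sSup ((fun z => ‖deriv (B lam) z‖) '' {z : ℂ | ‖z‖ = 1}))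
    (hmf : ∀ lam, mf lam =
      sInf ((fun z => ‖deriv (B lam) z‖) '' {z : ℂ | ‖z‖ = 1})) :
    StrictMonoOn Mf (Set.Ioo 0 (1 / A)) ∧ StrictAntiOn mf (Set.Ioo 0 (1 / A)) :=
  blaschke_scaled_monotone_general n a A hA hA0 B hB Mf mf hMf hmf
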